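/- arXiv:0903.3774 — 2 statements merged into one kernel-verified Lean document; each statement's English description precedes it below -/
import Mathlib

section
/- The holomorphic automorphism F of ℂ^{n+1} defined by F(z,w) = (z_1,…,z_m, e^w z_{m+1},…, e^w z_n, w) maps the hypersurface 𝒬 = {Σ_{j=1}^m |z_j|² + |w|² = 1} bijectively onto itself, but F does not extend continuously (hence not holomorphically) to an automorphism of ℂP^{n+1}. -/
/-!
`F` only rescales the coordinates `z_j`, `j ≥ m`, which do not occur in the equation of `𝒬`,
so it is a biholomorphism preserving `𝒬`, with inverse given by `e^{-w}` in place of `e^w`.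
If `F` were induced by a linear map `Φ` of `ℂ^{n+2}`, then along the affine line
`w ↦ (e_m, w)` the homogeneous coordinates `Φ(1, e_m, w)` would depend affinely on `w`, and
comparing the `0`-th and `e_m`-coordinates would give affine functions with
`(a + w b) e^w = c + w d` for all `w`; evaluating at `w = 0, 2πi, ±1` forces `a = b = 0`.
-/

open scoped LinearAlgebra.Projectivization
open Complex

/-- `F(z,w) = (z_1,…,z_m, e^w z_{m+1},…,e^w z_n, w)` (0-indexed). -/
noncomputable def Fmap (n m : ℕ) : (Fin n → ℂ) × ℂ → (Fin n → ℂ) × ℂ :=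
  fun p => (fun j => if (j : ℕ) < m then p.1 j else Complex.exp p.2 * p.1 j, p.2)

lemma Complex.exp_ofReal_ne_one {x : ℝ} (hx : x ≠ 0) : exp (x : ℂ) ≠ 1 := by
  rw [← ofReal_exp, Ne, ofReal_eq_one, Real.exp_eq_one_iff]
  exact hx

lemma Complex.eq_zero_of_mul_exp_eq_affine {a b c d : ℂ}
    (h : ∀ w : ℂ, (a + w * b) * exp w = c + w * d) : a = 0 ∧ b = 0 := by
  have hac : a = c := by simpa using h 0
  have hbd : b = d := by
    have h2πi := h (2 * Real.pi * I)
    rw [exp_two_pi_mul_I, mul_one, hac] at h2πi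
    exact mul_left_cancel₀ two_pi_I_ne_zero (add_left_cancel h2πi)
  have hvanish : ∀ w : ℂ, exp w ≠ 1 → a + w * b = 0 := fun w hw => by
    have : (a + w * b) * (exp w - 1) = 0 := by linear_combination h w - hac - w * hbd
    exact (mul_eq_zero.1 this).resolve_right (sub_ne_zero.2 hw)
  have hone := hvanish 1 (by simpa using exp_ofReal_ne_one one_ne_zero)
  have hneg := hvanish (-1) (by simpa using exp_ofReal_ne_one (neg_ne_zero.2 one_ne_zero))
  constructor
  · linear_combination (hone + hneg) / 2
  · linear_combination (hone - hneg) / 2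

lemma Projectivization.mk_eq_mk_one_prod {K V : Type*} [Field K] [AddCommGroup V] [Module K V]
    {x : V} {y : K × V} (hy : y ≠ 0) (h : mk K y hy = mk K (1, x) (by simp)) :
    y.1 ≠ 0 ∧ y = y.1 • (1, x) := by
  obtain ⟨a, rfl⟩ := (mk_eq_mk_iff K _ _ hy _).1 h
  simp [Units.smul_def]

section Fmap

variable {n m : ℕ}

noncomputable def FmapInv (n m : ℕ) : (Fin n → ℂ) × ℂ → (Fin n → ℂ) × ℂ :=
  fun p => (fun j => if (j : ℕ) < m then p.1 j else exp (-p.2) * p.1 j, p.2)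

lemma Fmap_leftInverse : Function.LeftInverse (FmapInv n m) (Fmap n m) := fun p => by
  refine Prod.ext (funext fun j => ?_) rfl
  by_cases hj : (j : ℕ) < m <;> simp [Fmap, FmapInv, hj, ← mul_assoc, ← exp_add]

lemma Fmap_rightInverse : Function.RightInverse (FmapInv n m) (Fmap n m) := fun p => by
  refine Prod.ext (funext fun j => ?_) rfl
  by_cases hj : (j : ℕ) < m <;> simp [Fmap, FmapInv, hj, ← mul_assoc, ← exp_add]

lemma Fmap_bijective : Function.Bijective (Fmap n m) :=
  ⟨Fmap_leftInverse.injective, Fmap_rightInverse.surjective⟩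

lemma Fmap_differentiable : Differentiable ℂ (Fmap n m) := by
  refine .prodMk (differentiable_pi.2 fun j => ?_) differentiable_snd
  by_cases hj : (j : ℕ) < m <;> simp only [hj, if_true, if_false] <;> fun_prop

/-- The defining function `∑_{j<m} |z_j|² + |w|²` of the hypersurface `𝒬`. -/
noncomputable def quadricForm (n m : ℕ) (p : (Fin n → ℂ) × ℂ) : ℝ :=
  (∑ j : Fin n, if (j : ℕ) < m then ‖p.1 j‖ ^ 2 else 0) + ‖p.2‖ ^ 2

lemma quadricForm_comp_Fmap : quadricForm n m ∘ Fmap n m = quadricForm n m := by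
  funext p
  refine congrArg (· + _) (Finset.sum_congr rfl fun j _ => ?_)
  by_cases hj : (j : ℕ) < m <;> simp [Fmap, hj]

lemma Fmap_image_quadric (s : Set ℝ) :
    Fmap n m '' (quadricForm n m ⁻¹' s) = quadricForm n m ⁻¹' s := by
  conv_lhs => rw [← quadricForm_comp_Fmap, Set.preimage_comp]
  exact Set.image_preimage_eq _ Fmap_bijective.surjective

lemma Fmap_fst_apply_of_le {i : Fin n} (hi : m ≤ i) (z : Fin n → ℂ) (w : ℂ) :
    (Fmap n m (z, w)).1 i = exp w * z i := by
  simp [Fmap, hi.not_gt]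

lemma Fmap_ne_projectivization_map (hm : m < n)
    (Φ : (ℂ × (Fin n → ℂ) × ℂ) →ₗ[ℂ] (ℂ × (Fin n → ℂ) × ℂ)) (hΦ : Function.Injective Φ) :
    ¬ ∀ (z : Fin n → ℂ) (w : ℂ),
      Projectivization.map Φ hΦ (Projectivization.mk ℂ ((1 : ℂ), z, w) (by simp))
        = Projectivization.mk ℂ ((1 : ℂ), (Fmap n m (z, w)).1, (Fmap n m (z, w)).2) (by simp) := by
  intro h
  let i : Fin n := ⟨m, hm⟩
  set u := Φ (1, Pi.single i 1, 0)
  set v := Φ (0, 0, 1)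
  have hline (w : ℂ) : Φ (1, Pi.single i 1, w) = u + w • v := by
    rw [← map_smul, ← map_add]
    simp
  have hchart (w : ℂ) :
      (u + w • v).1 ≠ 0 ∧ u + w • v = (u + w • v).1 • (1, Fmap n m (Pi.single i 1, w)) := by
    rw [← hline]
    refine Projectivization.mk_eq_mk_one_prod ((map_ne_zero_iff Φ hΦ).2 (by simp)) ?_
    rw [← Projectivization.map_mk]
    exact h _ w
  have hexp : ∀ w : ℂ, (u.1 + w * v.1) * exp w = u.2.1 i + w * v.2.1 i := fun w => by
    have := congrArg (fun p => p.2.1 i) (hchart w).2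
    rw [Prod.smul_snd, Prod.smul_fst, Pi.smul_apply,
      Fmap_fst_apply_of_le (i := i) le_rfl, Pi.single_eq_same] at this
    simpa [mul_comm] using this.symm
  refine (hchart 0).1 ?_
  simp [(eq_zero_of_mul_exp_eq_affine hexp).1]

end Fmap

/-- `F` is a holomorphic automorphism of `ℂ^{n+1}` mapping the hypersurface
`𝒬 = {∑_{j≤m}|z_j|² + |w|² = 1}` bijectively onto itself, but `F` is not the restriction
of any projective linear transformation of `ℂP^{n+1}` (so it does not extend to an
automorphism of `ℂP^{n+1}`). -/
theorem stmt5 (n m : ℕ) (hm : m < n) :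
    Differentiable ℂ (Fmap n m) ∧
    Function.Bijective (Fmap n m) ∧
    Fmap n m ''
        {p : (Fin n → ℂ) × ℂ |
          (∑ j : Fin n, if (j : ℕ) < m then ‖p.1 j‖ ^ 2 else 0) + ‖p.2‖ ^ 2 = 1}
      = {p : (Fin n → ℂ) × ℂ |
          (∑ j : Fin n, if (j : ℕ) < m then ‖p.1 j‖ ^ 2 else 0) + ‖p.2‖ ^ 2 = 1} ∧
    ¬ ∃ Φ : (ℂ × (Fin n → ℂ) × ℂ) ≃ₗ[ℂ] (ℂ × (Fin n → ℂ) × ℂ),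
        ∀ (z : Fin n → ℂ) (w : ℂ),
          Projectivization.map Φ.toLinearMap Φ.injective
              (Projectivization.mk ℂ ((1 : ℂ), z, w) (by simp))
            = Projectivization.mk ℂ
                ((1 : ℂ), (Fmap n m (z, w)).1, (Fmap n m (z, w)).2) (by simp) := by
  refine ⟨Fmap_differentiable, Fmap_bijective, Fmap_image_quadric {1}, ?_⟩
  rintro ⟨Φ, hΦ⟩
  exact Fmap_ne_projectivization_map hm Φ.toLinearMap Φ.injective hΦ
end

section
/- The map f : 𝒬̄ → 𝒬̄ that fixes every point of 𝒮 = 𝒬̄ ∩ {ζ = 0} and equals F(z,w) = (z_1,…,z_m, e^w z_{m+1},…, e^w z_n, w) on the affine part 𝒬 = 𝒬̄ ∩ {ζ ≠ 0} is continuous on all of 𝒬̄. -/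
open scoped LinearAlgebra.Projectivization
open Complex

noncomputable instance {V : Type*} [AddCommGroup V] [Module ℂ V] [TopologicalSpace V] :
    TopologicalSpace (ℙ ℂ V) := instTopologicalSpaceQuotient

/-- `𝒬̄ = {(ζ:𝐳:𝐰) : |ζ|² − |𝐰|² = ∑_{j≤m}|𝐳_j|²} ⊆ ℂP^{n+1}`. -/
def Qbar (n m : ℕ) : Set (ℙ ℂ (ℂ × (Fin n → ℂ) × ℂ)) :=
  {p | ∃ (ζ : ℂ) (z : Fin n → ℂ) (w : ℂ) (h : (ζ, z, w) ≠ 0),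
    p = Projectivization.mk ℂ (ζ, z, w) h ∧
    ‖ζ‖ ^ 2 - ‖w‖ ^ 2 = ∑ j : Fin n, if (j : ℕ) < m then ‖z j‖ ^ 2 else 0}

/-- `𝒮 = 𝒬̄ ∩ {ζ = 0}`. -/
def Sset (n m : ℕ) : Set (ℙ ℂ (ℂ × (Fin n → ℂ) × ℂ)) :=
  Qbar n m ∩ {p | ∃ (z : Fin n → ℂ) (w : ℂ) (h : ((0 : ℂ), z, w) ≠ 0),
    p = Projectivization.mk ℂ ((0 : ℂ), z, w) h}

/-!
On the cone over `𝒬̄` the homogeneous lift `(ζ, z', z'', w) ↦ (ζ, z', e^{w/ζ} z'', w)` of `F`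
(with `z' = (z_j)_{j < m}`) blows up as `ζ → 0`, but multiplying it by `e^{-w/ζ}` gives
`(e^{-w/ζ} ζ, e^{-w/ζ} z', z'', e^{-w/ζ} w)`, which represents the same point. On the cone
`|w| ≤ |ζ|`, so this factor has modulus at most `e`. The points of the cone with `ζ = 0` are the
`(0, 0, z'', 0)`, fixed by every such partial rescaling, so the rescaled lift is `e`-Lipschitz
at them. Continuity descends to `ℙ` because the projection from the nonzero vectors is an open
quotient map, hence stays a quotient map over `𝒬̄`.
-/

namespace Projectivization

variable {V : Type*} [AddCommGroup V] [Module ℂ V] [TopologicalSpace V] [ContinuousConstSMul ℂ V]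

theorem isOpenQuotientMap_mk' : IsOpenQuotientMap (mk' ℂ : {v : V // v ≠ 0} → ℙ ℂ V) := by
  refine ⟨fun p => ⟨⟨p.rep, p.rep_nonzero⟩, p.mk_rep⟩, continuous_quotient_mk', fun U hU => ?_⟩
  have hsat : mk' ℂ ⁻¹' (mk' ℂ '' U) = ⋃ c : ℂˣ, (c • ·) ⁻¹' U := by
    ext u
    simp only [Set.mem_preimage, Set.mem_image, Set.mem_iUnion, mk'_eq_mk, mk_eq_mk_iff]
    constructor
    · rintro ⟨x, hx, c, hc⟩
      exact ⟨c, by rwa [show c • u = x from Subtype.ext hc]⟩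
    · rintro ⟨c, hc⟩
      exact ⟨c • u, hc, c, rfl⟩
  refine isOpen_coinduced.2 (hsat ▸ isOpen_iUnion fun c => hU.preimage ?_)
  exact (continuous_subtype_val.const_smul c).subtype_mk _

theorem continuousOn_of_lift {S : Set (ℙ ℂ V)} {C : Set V}
    (hSC : ∀ v (hv : v ≠ 0), mk ℂ v hv ∈ S → v ∈ C) {f : ℙ ℂ V → ℙ ℂ V} {G : V → V}
    (hG : ∀ v, v ≠ 0 → G v ≠ 0)
    (hf : ∀ v (hv : v ≠ 0), f (mk ℂ v hv) = mk ℂ (G v) (hG v hv))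
    (hGC : ContinuousOn G C) : ContinuousOn f S := by
  rw [continuousOn_iff_continuous_domRestrict,
    (isOpenQuotientMap_mk'.restrictPreimage S).isQuotientMap.continuous_iff]
  have hlift : S.domRestrict f ∘ S.restrictPreimage (mk' ℂ)
      = mk' ℂ ∘ fun u => ⟨G u.1.1, hG _ u.1.2⟩ := by
    funext u
    exact hf u.1.1 u.1.2
  rw [hlift]
  refine isOpenQuotientMap_mk'.continuous.comp (Continuous.subtype_mk ?_ _)
  exact hGC.comp_continuous (continuous_subtype_val.comp continuous_subtype_val)
    fun u => hSC _ _ u.2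

end Projectivization

namespace Qbar

open Projectivization

def cone (n m : ℕ) : Set (ℂ × (Fin n → ℂ) × ℂ) :=
  {v | ‖v.1‖ ^ 2 - ‖v.2.2‖ ^ 2 = ∑ j : Fin n, if (j : ℕ) < m then ‖v.2.1 j‖ ^ 2 else 0}

variable {n m : ℕ} {v v₀ : ℂ × (Fin n → ℂ) × ℂ}

theorem mem_cone_of_eq_mul {u : ℂ × (Fin n → ℂ) × ℂ} (c : ℂ) (hv : v ∈ cone n m)
    (h1 : u.1 = c * v.1) (h2 : ∀ j : Fin n, (j : ℕ) < m → u.2.1 j = c * v.2.1 j)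
    (h3 : u.2.2 = c * v.2.2) : u ∈ cone n m := by
  have hsum : (∑ j : Fin n, if (j : ℕ) < m then ‖u.2.1 j‖ ^ 2 else 0)
      = ‖c‖ ^ 2 * ∑ j : Fin n, if (j : ℕ) < m then ‖v.2.1 j‖ ^ 2 else 0 := by
    rw [Finset.mul_sum]
    refine Finset.sum_congr rfl fun j _ => ?_
    split_ifs with hj
    · rw [h2 j hj, norm_mul, mul_pow]
    · rw [mul_zero]
  rw [cone, Set.mem_ofPred_eq, hsum, ← hv, h1, h3, norm_mul, norm_mul]
  ring

theorem mk_mem_iff (hv : v ≠ 0) : mk ℂ v hv ∈ Qbar n m ↔ v ∈ cone n m := by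
  constructor
  · rintro ⟨ζ, z, w, h, hmk, hcone⟩
    obtain ⟨a, rfl⟩ := (mk_eq_mk_iff ℂ _ _ _ _).1 hmk
    exact mem_cone_of_eq_mul (a : ℂ) hcone rfl (fun _ _ => rfl) rfl
  · exact fun hcone => ⟨v.1, v.2.1, v.2.2, hv, rfl, hcone⟩

theorem norm_snd_snd_le_norm_fst (hv : v ∈ cone n m) : ‖v.2.2‖ ≤ ‖v.1‖ := by
  have hsum : 0 ≤ ∑ j : Fin n, if (j : ℕ) < m then ‖v.2.1 j‖ ^ 2 else 0 :=
    Finset.sum_nonneg fun j _ => by split_ifs <;> positivity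
  rw [cone, Set.mem_ofPred_eq] at hv
  exact (pow_le_pow_iff_left₀ (norm_nonneg _) (norm_nonneg _) two_ne_zero).1 (by linarith)

theorem eq_zero_of_fst_eq_zero (hv : v ∈ cone n m) (h0 : v.1 = 0) :
    v.2.2 = 0 ∧ ∀ j : Fin n, (j : ℕ) < m → v.2.1 j = 0 := by
  have hw : v.2.2 = 0 := norm_le_zero_iff.1 (by simpa [h0] using norm_snd_snd_le_norm_fst hv)
  refine ⟨hw, fun j hj => ?_⟩
  rw [cone, Set.mem_ofPred_eq, h0, hw, norm_zero, sub_self, eq_comm,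
    Finset.sum_eq_zero_iff_of_nonneg fun i _ => by split_ifs <;> positivity] at hv
  simpa [hj] using hv j (Finset.mem_univ j)

variable (m) in
noncomputable def scaleDiag (c : ℂ) (v : ℂ × (Fin n → ℂ) × ℂ) : ℂ × (Fin n → ℂ) × ℂ :=
  (c * v.1, fun j => if (j : ℕ) < m then c * v.2.1 j else v.2.1 j, c * v.2.2)

theorem scaleDiag_one (v : ℂ × (Fin n → ℂ) × ℂ) : scaleDiag m 1 v = v := by
  ext j <;> simp [scaleDiag]

theorem scaleDiag_mem_cone (c : ℂ) (hv : v ∈ cone n m) : scaleDiag m c v ∈ cone n m :=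
  mem_cone_of_eq_mul c hv rfl (fun _ hj => if_pos hj) rfl

theorem scaleDiag_eq_self_of_fst_eq_zero (c : ℂ) (hv : v ∈ cone n m) (h0 : v.1 = 0) :
    scaleDiag m c v = v := by
  obtain ⟨hw, hz⟩ := eq_zero_of_fst_eq_zero hv h0
  ext j
  · simp [scaleDiag, h0]
  · by_cases hj : (j : ℕ) < m <;> simp [scaleDiag, hj, hz]
  · simp [scaleDiag, hw]

theorem scaleDiag_smul (c a : ℂ) (v : ℂ × (Fin n → ℂ) × ℂ) :
    scaleDiag m c (a • v) = a • scaleDiag m c v := by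
  ext <;> simp only [scaleDiag, Prod.smul_fst, Prod.smul_snd, Pi.smul_apply, smul_eq_mul]
  · ring
  · split_ifs <;> ring
  · ring

theorem scaleDiag_sub (c : ℂ) (u v : ℂ × (Fin n → ℂ) × ℂ) :
    scaleDiag m c u - scaleDiag m c v = scaleDiag m c (u - v) := by
  ext <;> simp only [scaleDiag, Prod.fst_sub, Prod.snd_sub, Pi.sub_apply]
  · ring
  · split_ifs <;> ring
  · ring

theorem scaleDiag_ne_zero {c : ℂ} (hc : c ≠ 0) (hv : v ≠ 0) : scaleDiag m c v ≠ 0 := by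
  contrapose! hv
  ext
  · simpa [scaleDiag, hc] using congrArg Prod.fst hv
  · rename_i j
    have := congrFun (congrArg (·.2.1) hv) j
    by_cases hj : (j : ℕ) < m <;> simpa [scaleDiag, hj, hc] using this
  · simpa [scaleDiag, hc] using congrArg (·.2.2) hv

theorem norm_scaleDiag_le (c : ℂ) (v : ℂ × (Fin n → ℂ) × ℂ) :
    ‖scaleDiag m c v‖ ≤ max ‖c‖ 1 * ‖v‖ := by
  have hscale : ∀ x : ℂ, ‖x‖ ≤ ‖v‖ → ‖c * x‖ ≤ max ‖c‖ 1 * ‖v‖ := fun x hx => by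
    rw [norm_mul]; gcongr; exact le_max_left _ _
  have hid : ∀ x : ℂ, ‖x‖ ≤ ‖v‖ → ‖x‖ ≤ max ‖c‖ 1 * ‖v‖ := fun x hx =>
    hx.trans (le_mul_of_one_le_left (norm_nonneg _) (le_max_right _ _))
  have hz : ∀ j, ‖v.2.1 j‖ ≤ ‖v‖ := fun j =>
    (norm_le_pi_norm _ j).trans ((norm_fst_le v.2).trans (norm_snd_le v))
  refine norm_prod_le_iff.2 ⟨hscale _ (norm_fst_le v), norm_prod_le_iff.2 ⟨?_, ?_⟩⟩
  · refine (pi_norm_le_iff_of_nonneg (by positivity)).2 fun j => ?_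
    dsimp only [scaleDiag]
    split_ifs
    · exact hscale _ (hz j)
    · exact hid _ (hz j)
  · exact hscale _ ((norm_snd_le v.2).trans (norm_snd_le v))

theorem continuous_scaleDiag :
    Continuous fun p : ℂ × ℂ × (Fin n → ℂ) × ℂ => scaleDiag m p.1 p.2 := by
  refine (continuous_fst.mul (by fun_prop)).prodMk
    ((continuous_pi fun j => ?_).prodMk (continuous_fst.mul (by fun_prop)))
  by_cases hj : (j : ℕ) < m <;> simp only [hj, if_true, if_false] <;> fun_prop

noncomputable def expFactor (v : ℂ × (Fin n → ℂ) × ℂ) : ℂ :=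
  if v.1 = 0 then 1 else exp (-(v.2.2 / v.1))

theorem expFactor_ne_zero (v : ℂ × (Fin n → ℂ) × ℂ) : expFactor v ≠ 0 := by
  unfold expFactor; split_ifs <;> simp [exp_ne_zero]

theorem expFactor_smul {a : ℂ} (ha : a ≠ 0) (v : ℂ × (Fin n → ℂ) × ℂ) :
    expFactor (a • v) = expFactor v := by
  simp only [expFactor, Prod.smul_fst, Prod.smul_snd, smul_eq_mul, mul_eq_zero, ha, false_or,
    mul_div_mul_left _ _ ha]

theorem norm_expFactor_le (hv : v ∈ cone n m) : ‖expFactor v‖ ≤ Real.exp 1 := by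
  unfold expFactor
  split_ifs with h0
  · simp only [norm_one]
    exact Real.one_le_exp zero_le_one
  · rw [norm_exp, Real.exp_le_exp]
    calc (-(v.2.2 / v.1)).re ≤ ‖-(v.2.2 / v.1)‖ := re_le_norm _
      _ = ‖v.2.2‖ / ‖v.1‖ := by rw [norm_neg, norm_div]
      _ ≤ 1 := div_le_one_of_le₀ (norm_snd_snd_le_norm_fst hv) (norm_nonneg _)

theorem continuousAt_expFactor (h0 : v.1 ≠ 0) : ContinuousAt expFactor v := by
  have hne : {u : ℂ × (Fin n → ℂ) × ℂ | u.1 ≠ 0} ∈ nhds v :=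
    (isOpen_ne_fun continuous_fst continuous_const).mem_nhds h0
  refine ContinuousAt.congr ?_ (Filter.eventually_of_mem hne fun u hu => (if_neg hu).symm)
  exact (((continuous_snd.comp continuous_snd).continuousAt.div
    continuous_fst.continuousAt h0).neg).cexp

variable (m) in
noncomputable def homLift (v : ℂ × (Fin n → ℂ) × ℂ) : ℂ × (Fin n → ℂ) × ℂ :=
  scaleDiag m (expFactor v) v

theorem homLift_ne_zero (hv : v ≠ 0) : homLift m v ≠ 0 :=
  scaleDiag_ne_zero (expFactor_ne_zero v) hv

theorem homLift_smul {a : ℂ} (ha : a ≠ 0) (v : ℂ × (Fin n → ℂ) × ℂ) :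
    homLift m (a • v) = a • homLift m v := by
  rw [homLift, homLift, expFactor_smul ha, scaleDiag_smul]

theorem homLift_of_fst_eq_zero (h0 : v.1 = 0) : homLift m v = v := by
  rw [homLift, expFactor, if_pos h0, scaleDiag_one]

theorem homLift_one (z : Fin n → ℂ) (w : ℂ) :
    homLift m (1, z, w) = exp (-w) • ((1 : ℂ), (Fmap n m (z, w)).1, (Fmap n m (z, w)).2) := by
  ext j
  · simp [homLift, expFactor, scaleDiag]
  · by_cases hj : (j : ℕ) < m
    · simp [homLift, expFactor, scaleDiag, Fmap, hj]
    · simp [homLift, expFactor, scaleDiag, Fmap, hj, ← mul_assoc, ← exp_add]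
  · simp [homLift, expFactor, scaleDiag, Fmap]

theorem dist_homLift_le (hv₀ : v₀ ∈ cone n m) (h0 : v₀.1 = 0) (hv : v ∈ cone n m) :
    dist (homLift m v) v₀ ≤ Real.exp 1 * dist v v₀ := by
  rw [dist_eq_norm, dist_eq_norm, homLift]
  conv_lhs => rw [← scaleDiag_eq_self_of_fst_eq_zero (expFactor v) hv₀ h0, scaleDiag_sub]
  refine (norm_scaleDiag_le _ _).trans ?_
  gcongr
  exact max_le (norm_expFactor_le hv) (Real.one_le_exp zero_le_one)

theorem continuousOn_homLift : ContinuousOn (homLift m) (cone n m) := by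
  intro v₀ hv₀
  by_cases h0 : v₀.1 = 0
  · have hdist : Filter.Tendsto (fun v => Real.exp 1 * dist v v₀) (nhdsWithin v₀ (cone n m))
        (nhds 0) := by
      have hcont : Continuous fun v : ℂ × (Fin n → ℂ) × ℂ => Real.exp 1 * dist v v₀ := by
        fun_prop
      simpa using (hcont.tendsto v₀).mono_left nhdsWithin_le_nhds
    rw [ContinuousWithinAt, homLift_of_fst_eq_zero h0]
    exact tendsto_iff_dist_tendsto_zero.2 (squeeze_zero' (.of_forall fun _ => dist_nonneg)
      (eventually_nhdsWithin_of_forall fun _ hv => dist_homLift_le hv₀ h0 hv) hdist)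
  · exact ((continuous_scaleDiag.continuousAt).comp
      ((continuousAt_expFactor h0).prodMk continuousAt_id)).continuousWithinAt

variable (m) in
noncomputable def map : ℙ ℂ (ℂ × (Fin n → ℂ) × ℂ) → ℙ ℂ (ℂ × (Fin n → ℂ) × ℂ) :=
  Projectivization.lift (fun u => mk ℂ (homLift m u) (homLift_ne_zero u.2)) fun a b t hab => by
    have ht : t ≠ 0 := by rintro rfl; exact a.2 (by simpa using hab)
    exact (mk_eq_mk_iff' ℂ _ _ _ _).2 ⟨t, by rw [hab, homLift_smul ht]⟩

theorem map_mk (hv : v ≠ 0) : map m (mk ℂ v hv) = mk ℂ (homLift m v) (homLift_ne_zero hv) :=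
  rfl

theorem mapsTo_map : Set.MapsTo (map m) (Qbar n m) (Qbar n m) := by
  intro p hp
  induction p using Projectivization.ind with
  | h v hv =>
    rw [map_mk, mk_mem_iff]
    exact scaleDiag_mem_cone _ ((mk_mem_iff hv).1 hp)

theorem continuousOn_map : ContinuousOn (map m) (Qbar n m) :=
  continuousOn_of_lift (fun _ hv => (mk_mem_iff hv).1) (fun _ => homLift_ne_zero)
    (fun _ _ => rfl) continuousOn_homLift

theorem map_eq_self_of_mem_Sset {p : ℙ ℂ (ℂ × (Fin n → ℂ) × ℂ)} (hp : p ∈ Sset n m) :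
    map m p = p := by
  obtain ⟨-, z, w, hv, rfl⟩ := hp
  simp only [map_mk, homLift_of_fst_eq_zero (v := ((0 : ℂ), z, w)) rfl]

theorem map_mk_one (z : Fin n → ℂ) (w : ℂ) :
    map m (mk ℂ ((1 : ℂ), z, w) (by simp))
      = mk ℂ ((1 : ℂ), (Fmap n m (z, w)).1, (Fmap n m (z, w)).2) (by simp) :=
  (mk_eq_mk_iff' ℂ _ _ _ _).2 ⟨exp (-w), (homLift_one z w).symm⟩

end Qbar

/-- the map `f : 𝒬̄ → 𝒬̄` fixing `𝒮 = 𝒬̄ ∩ {ζ = 0}` pointwise and equal to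
`F(z,w) = (z_1,…,z_m,e^wz_{m+1},…,e^wz_n,w)` on the affine part `𝒬` is continuous on all
of `𝒬̄`. -/
theorem stmt7 (n m : ℕ) :
    ∃ f : ℙ ℂ (ℂ × (Fin n → ℂ) × ℂ) → ℙ ℂ (ℂ × (Fin n → ℂ) × ℂ),
      Set.MapsTo f (Qbar n m) (Qbar n m) ∧
      ContinuousOn f (Qbar n m) ∧
      (∀ p ∈ Sset n m, f p = p) ∧
      ∀ (z : Fin n → ℂ) (w : ℂ),
        (∑ j : Fin n, if (j : ℕ) < m then ‖z j‖ ^ 2 else 0) + ‖w‖ ^ 2 = 1 →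
        f (Projectivization.mk ℂ ((1 : ℂ), z, w) (by simp))
          = Projectivization.mk ℂ
              ((1 : ℂ), (Fmap n m (z, w)).1, (Fmap n m (z, w)).2) (by simp) :=
  ⟨Qbar.map m, Qbar.mapsTo_map, Qbar.continuousOn_map, fun _ => Qbar.map_eq_self_of_mem_Sset,
    fun z w _ => Qbar.map_mk_one z w⟩
end
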